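/- Let Ω be a nonempty compact convex subset of ℝ^n (n ≥ 2), let v be a unit vector and c ∈ ℝ, and suppose Ω is symmetric in the hyperplane H = {x : x·v = c}, i.e. R_{v,c}(Ω) = Ω. Then Uf(Ω) ⊆ H. -/

import Mathlib

open scoped RealInnerProductSpace

/-- Reflection in the hyperplane `{x : x·v = b}` (for a unit vector `v`). -/
noncomputable def reflHyp {n : ℕ} (v : EuclideanSpace ℝ (Fin n)) (b : ℝ)
    (x : EuclideanSpace ℝ (Fin n)) : EuclideanSpace ℝ (Fin n) :=
  x - (2 * (⟪x, v⟫ - b)) • v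

/-- The open cap of `X` above the hyperplane `{x : x·v = b}`. -/
def cap {n : ℕ} (X : Set (EuclideanSpace ℝ (Fin n))) (v : EuclideanSpace ℝ (Fin n)) (b : ℝ) :
    Set (EuclideanSpace ℝ (Fin n)) :=
  X ∩ {x | b < ⟪x, v⟫}

/-- The level of the maximal cap of `X` in direction `v`. -/
noncomputable def level {n : ℕ} (X : Set (EuclideanSpace ℝ (Fin n)))
    (v : EuclideanSpace ℝ (Fin n)) : ℝ :=
  sInf {a : ℝ | ∀ b : ℝ, a ≤ b → reflHyp v b '' cap X v b ⊆ X}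

/-- The minimal unfolded region (heart) of `X`. -/
noncomputable def Uf {n : ℕ} (X : Set (EuclideanSpace ℝ (Fin n))) :
    Set (EuclideanSpace ℝ (Fin n)) :=
  ⋂ v ∈ {v : EuclideanSpace ℝ (Fin n) | ‖v‖ = 1}, {x | ⟪x, v⟫ ≤ level X v}

/-- The δ-parallel body of `Ω`: the union of closed δ-balls centered in `Ω`. -/
def parallelBody {n : ℕ} (Ω : Set (EuclideanSpace ℝ (Fin n))) (δ : ℝ) :
    Set (EuclideanSpace ℝ (Fin n)) :=
  ⋃ x ∈ Ω, Metric.closedBall x δ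

/-!
A set symmetric in `{x·v = c}` is mapped into itself by every reflection `R_{v,b}` with `b ≥ c`
restricted to its cap above level `b`: for `x` in that cap, `R_{v,b} x` lies on the segment from
`x` to `R_{v,c} x`, so convexity applies. Hence `l_Ω(v) ≤ c`, and since `R_{-v,-c} = R_{v,c}`
also `l_Ω(-v) ≤ -c`; a point of `Uf(Ω)` therefore satisfies `c ≤ x·v ≤ c`.
-/

section Reflection

variable {n : ℕ}

lemma inner_reflHyp {v : EuclideanSpace ℝ (Fin n)} (hv : ‖v‖ = 1) (b : ℝ)
    (x : EuclideanSpace ℝ (Fin n)) : ⟪reflHyp v b x, v⟫ = 2 * b - ⟪x, v⟫ := by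
  have hvv : ⟪v, v⟫ = (1 : ℝ) := by simp [hv]
  rw [reflHyp, inner_sub_left, real_inner_smul_left, hvv]
  ring

lemma reflHyp_neg (v : EuclideanSpace ℝ (Fin n)) (b : ℝ) :
    reflHyp (-v) (-b) = reflHyp v b := by
  funext x
  simp only [reflHyp, inner_neg_right]
  module

lemma reflHyp_mem_segment {v x : EuclideanSpace ℝ (Fin n)} {b c : ℝ} (hcb : c ≤ b)
    (hbx : b < ⟪x, v⟫) : reflHyp v b x ∈ segment ℝ x (reflHyp v c x) := by
  have hcx : 0 < ⟪x, v⟫ - c := by linarith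
  set t := (⟪x, v⟫ - b) / (⟪x, v⟫ - c) with ht
  refine ⟨1 - t, t, ?_, div_nonneg (by linarith) hcx.le, by ring, ?_⟩
  · rw [sub_nonneg, ht, div_le_one hcx]
    linarith
  · have hcoef : t * (2 * (⟪x, v⟫ - c)) = 2 * (⟪x, v⟫ - b) := by
      rw [ht]
      field_simp
    simp only [reflHyp, smul_sub, sub_smul, one_smul, smul_smul, hcoef]
    abel

end Reflection

section Level

variable {n : ℕ} {X : Set (EuclideanSpace ℝ (Fin n))} {v : EuclideanSpace ℝ (Fin n)}

lemma reflHyp_image_cap_subset_of_convex (hconv : Convex ℝ X) {c b : ℝ}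
    (hsym : reflHyp v c '' X ⊆ X) (hcb : c ≤ b) : reflHyp v b '' cap X v b ⊆ X := by
  rintro _ ⟨x, ⟨hxX, hbx⟩, rfl⟩
  exact hconv.segment_subset hxX (hsym ⟨x, hxX, rfl⟩) (reflHyp_mem_segment hcb hbx)

/-- Reflecting a point minimizing `x·v` shows that no level above its height works. -/
lemma bddBelow_levelSet (hX : IsCompact X) (hne : X.Nonempty) (hv : ‖v‖ = 1) :
    BddBelow {a : ℝ | ∀ b : ℝ, a ≤ b → reflHyp v b '' cap X v b ⊆ X} := by
  obtain ⟨x₀, hx₀X, hx₀min⟩ :=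
    hX.exists_isMinOn hne (continuous_id.inner continuous_const :
      Continuous fun x : EuclideanSpace ℝ (Fin n) => ⟪x, v⟫).continuousOn
  refine ⟨⟪x₀, v⟫, fun a ha => ?_⟩
  by_contra! hlt
  have hmin : ⟪x₀, v⟫ ≤ ⟪reflHyp v a x₀, v⟫ := hx₀min (ha a le_rfl ⟨x₀, ⟨hx₀X, hlt⟩, rfl⟩)
  rw [inner_reflHyp hv] at hmin
  linarith

lemma level_le_of_reflHyp_image_subset (hX : IsCompact X) (hne : X.Nonempty)
    (hconv : Convex ℝ X) (hv : ‖v‖ = 1) {c : ℝ} (hsym : reflHyp v c '' X ⊆ X) :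
    level X v ≤ c :=
  csInf_le (bddBelow_levelSet hX hne hv) fun _ hcb =>
    reflHyp_image_cap_subset_of_convex hconv hsym hcb

lemma inner_le_level_of_mem_Uf {x : EuclideanSpace ℝ (Fin n)} (hx : x ∈ Uf X) (hv : ‖v‖ = 1) :
    ⟪x, v⟫ ≤ level X v :=
  Set.mem_iInter₂.1 hx v hv

end Level

theorem stmt13_general {n : ℕ} (Ω : Set (EuclideanSpace ℝ (Fin n)))
    (hΩne : Ω.Nonempty) (hΩ : IsCompact Ω) (hconv : Convex ℝ Ω)
    (v : EuclideanSpace ℝ (Fin n)) (hv : ‖v‖ = 1) (c : ℝ)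
    (hsym : reflHyp v c '' Ω = Ω) :
    Uf Ω ⊆ {x | ⟪x, v⟫ = c} := by
  intro x hx
  have hv' : ‖-v‖ = 1 := by rw [norm_neg, hv]
  have hle : ⟪x, v⟫ ≤ c := (inner_le_level_of_mem_Uf hx hv).trans
    (level_le_of_reflHyp_image_subset hΩ hΩne hconv hv hsym.subset)
  have hge : ⟪x, -v⟫ ≤ -c := (inner_le_level_of_mem_Uf hx hv').trans
    (level_le_of_reflHyp_image_subset hΩ hΩne hconv hv' (by rw [reflHyp_neg, hsym]))
  rw [inner_neg_right] at hge
  exact le_antisymm hle (by linarith)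

theorem stmt13 {n : ℕ} (hn : 2 ≤ n) (Ω : Set (EuclideanSpace ℝ (Fin n)))
    (hΩne : Ω.Nonempty) (hΩ : IsCompact Ω) (hconv : Convex ℝ Ω)
    (v : EuclideanSpace ℝ (Fin n)) (hv : ‖v‖ = 1) (c : ℝ)
    (hsym : reflHyp v c '' Ω = Ω) :
    Uf Ω ⊆ {x | ⟪x, v⟫ = c} :=
  stmt13_general Ω hΩne hΩ hconv v hv c hsym
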